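/- arXiv:0810.0816 — 9 statements merged into one kernel-verified Lean document; each statement's English description precedes it below -/
import Mathlib

section
/- For all integers N and r with 1 ≤ r ≤ N, the sum of the products N₁·N₂·⋯·N_r over all r-tuples (N₁,…,N_r) of positive integers with N₁+⋯+N_r = N equals the binomial coefficient C(N+r−1, 2r−1). -/
/-!
A tuple with a zero entry has product zero, so the sum may be taken over all `r`-tuples of
naturals summing to `N`. Splitting off the first entry `a` gives the convolution
`v_{r+1}(N) = ∑_{a+b=N} a · v_r(b)`, and writing `a = C(a, 1)` the closed form propagates
through the dual Vandermonde identity `∑_{i+j=n} C(i, p) C(j, q) = C(n + 1, p + q + 1)`.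
-/

open Finset

namespace Finset.Nat

theorem sum_antidiagonal_choose_mul_choose (n p q : ℕ) :
    ∑ ij ∈ antidiagonal n, ij.1.choose p * ij.2.choose q = (n + 1).choose (p + q + 1) := by
  induction n generalizing q with
  | zero => cases p <;> cases q <;> simp [Nat.choose_eq_zero_of_lt]
  | succ n ih =>
    rw [sum_antidiagonal_succ']
    cases q with
    | zero =>
      have hockey := ih 0
      simp only [Nat.choose_zero_right, mul_one, add_zero] at hockey ⊢
      rw [hockey, Nat.choose_succ_succ' (n + 1), add_comm]
    | succ q =>
      simp only [Nat.choose_zero_succ, mul_zero, zero_add, Nat.choose_succ_succ' _ q, mul_add,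
        sum_add_distrib, ih]
      rw [Nat.choose_succ_succ' (n + 1)]
      rfl

theorem sum_antidiagonal_add_of_eq_zero {M : Type*} [AddCommMonoid M] (n s : ℕ)
    (f : ℕ → ℕ → M) (hf : ∀ i j, j < s → f i j = 0) :
    ∑ p ∈ antidiagonal (n + s), f p.1 p.2 = ∑ p ∈ antidiagonal n, f p.1 (p.2 + s) := by
  induction s generalizing f with
  | zero => rfl
  | succ s ih =>
    rw [← add_assoc, sum_antidiagonal_succ', hf _ _ s.succ_pos, zero_add,
      ih (fun i j ↦ f i (j + 1)) fun i j hj ↦ hf i _ (by omega)]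
    simp only [add_assoc]

theorem sum_antidiagonalTuple_succ {M : Type*} [AddCommMonoid M] (k n : ℕ)
    (f : (Fin (k + 1) → ℕ) → M) :
    ∑ x ∈ antidiagonalTuple (k + 1) n, f x
      = ∑ p ∈ antidiagonal n, ∑ x ∈ antidiagonalTuple k p.2, f (Fin.cons p.1 x) := by
  rw [sum_sigma']
  refine sum_bij' (fun x _ ↦ ⟨(x 0, n - x 0), Fin.tail x⟩) (fun p _ ↦ Fin.cons p.1.1 p.2)
    ?_ ?_ (by simp) ?_ (by simp)
  · intro x hx
    simp only [mem_antidiagonalTuple, Fin.sum_univ_succ] at hx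
    simp [mem_antidiagonalTuple, Fin.tail]
    omega
  · rintro ⟨⟨a, b⟩, x⟩ hx
    simp_all [mem_antidiagonalTuple, Fin.sum_univ_succ]
  · rintro ⟨⟨a, b⟩, x⟩ hx
    simp_all [mem_antidiagonalTuple]
    omega

theorem sum_antidiagonalTuple_prod_succ (k n : ℕ) :
    ∑ x ∈ antidiagonalTuple (k + 1) n, ∏ i, x i
      = ∑ p ∈ antidiagonal n, p.1 * ∑ x ∈ antidiagonalTuple k p.2, ∏ i, x i := by
  simp only [sum_antidiagonalTuple_succ, Fin.prod_univ_succ, Fin.cons_zero, Fin.cons_succ,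
    mul_sum]

theorem sum_antidiagonalTuple_prod (k n : ℕ) :
    ∑ x ∈ antidiagonalTuple (k + 1) n, ∏ i, x i = (n + k).choose (2 * k + 1) := by
  induction k generalizing n with
  | zero => simp
  | succ k ih =>
    simp only [sum_antidiagonalTuple_prod_succ (k + 1), ih]
    calc ∑ p ∈ antidiagonal n, p.1 * (p.2 + k).choose (2 * k + 1)
        = ∑ p ∈ antidiagonal (n + k), p.1.choose 1 * p.2.choose (2 * k + 1) := by
          rw [sum_antidiagonal_add_of_eq_zero n k (fun i j ↦ i.choose 1 * j.choose (2 * k + 1))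
            fun i j hj ↦ by rw [Nat.choose_eq_zero_of_lt (n := j) (by omega), mul_zero]]
          simp
      _ = (n + (k + 1)).choose (2 * (k + 1) + 1) := by
          rw [sum_antidiagonal_choose_mul_choose]
          congr 1; ring

end Finset.Nat

theorem sum_prod_filter_piFinset_Icc_eq_sum_antidiagonalTuple (r M N : ℕ) (hNM : N ≤ M) :
    ∑ f ∈ (Fintype.piFinset fun _ : Fin r => Icc 1 M).filter (fun f => ∑ i, f i = N), ∏ i, f i
      = ∑ f ∈ Nat.antidiagonalTuple r N, ∏ i, f i := by
  refine sum_subset (fun f hf ↦ ?_) fun f hf hf' ↦ prod_eq_zero_iff.mpr ?_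
  · simpa [Nat.mem_antidiagonalTuple] using (mem_filter.mp hf).2
  · rw [Nat.mem_antidiagonalTuple] at hf
    by_contra! hpos
    refine hf' (mem_filter.mpr ⟨Fintype.mem_piFinset.mpr fun i ↦ mem_Icc.mpr ⟨?_, ?_⟩, hf⟩)
    · exact Nat.one_le_iff_ne_zero.mpr (hpos i (mem_univ i))
    · exact (single_le_sum (fun j _ ↦ Nat.zero_le (f j)) (mem_univ i)).trans (hf.trans_le hNM)

theorem vacua_count_rank_general (N r : ℕ) (h1 : 1 ≤ r) :
    ∑ f ∈ (Fintype.piFinset fun _ : Fin r => Finset.Icc 1 N).filter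
        (fun f => ∑ i, f i = N), (∏ i, f i)
      = (N + r - 1).choose (2 * r - 1) := by
  obtain ⟨k, rfl⟩ := Nat.exists_eq_add_of_le' h1
  rw [sum_prod_filter_piFinset_Icc_eq_sum_antidiagonalTuple _ _ _ le_rfl,
    Nat.sum_antidiagonalTuple_prod]
  congr 1

/-- The number of quantum vacua of rank `r` of the U(N) theory with one adjoint:
the sum of the products `N₁ ⋯ N_r` over all `r`-tuples of positive integers with
`N₁ + ⋯ + N_r = N` equals `C(N + r - 1, 2r - 1)`. -/
theorem vacua_count_rank (N r : ℕ) (h1 : 1 ≤ r) (h2 : r ≤ N) :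
    ∑ f ∈ (Fintype.piFinset fun _ : Fin r => Finset.Icc 1 N).filter
        (fun f => ∑ i, f i = N), (∏ i, f i)
      = (N + r - 1).choose (2 * r - 1) :=
  vacua_count_rank_general N r h1
end

section
/- Let R = ℂ(q)[X]/(X³ − q) and let S denote the image of X in R. Then the element s = S + S² of R satisfies s³ − 3q·s − q − q² = 0, and moreover (1 − q)·S = 2q + s − s² holds in R. -/
/-! Both relations are polynomial identities in `S` modulo `S³ - q`, so they hold in any
commutative ring in which `S³ = q`; the chiral ring is one such ring. -/

section CubeRoot

variable {R : Type*} [CommRing R] {S q : R}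

theorem add_sq_cubic_relation_of_pow_three_eq (h : S ^ 3 = q) :
    (S + S ^ 2) ^ 3 - 3 * q * (S + S ^ 2) - q - q ^ 2 = 0 := by
  linear_combination (1 + 3 * S + 3 * S ^ 2 + S ^ 3 + q) * h

theorem one_sub_mul_eq_of_pow_three_eq (h : S ^ 3 = q) :
    (1 - q) * S = 2 * q + (S + S ^ 2) - (S + S ^ 2) ^ 2 := by
  linear_combination (2 + S) * h

end CubeRoot

theorem Ideal.Quotient.mk_X_pow_eq_mk_C {K : Type*} [CommRing K] (n : ℕ) (a : K) :
    Ideal.Quotient.mk (Ideal.span {Polynomial.X ^ n - Polynomial.C a}) Polynomial.X ^ n =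
      Ideal.Quotient.mk (Ideal.span {Polynomial.X ^ n - Polynomial.C a}) (Polynomial.C a) := by
  rw [← map_pow, Ideal.Quotient.mk_eq_mk_iff_sub_mem]
  exact Ideal.mem_span_singleton_self _

/-- In the chiral ring `R = ℂ(q)[X]/(X³ - q)` of the pure SU(3) gauge theory,
with `S` the image of `X` and `q` the image of the constant `q`, the dual
primitive operator `s = S + S²` satisfies `s³ - 3qs - q - q² = 0`, and
`(1 - q)·S = 2q + s - s²`. -/
theorem su3_chiral_dual_relations :
    let I : Ideal (Polynomial (RatFunc ℂ)) :=
      Ideal.span {Polynomial.X ^ 3 - Polynomial.C RatFunc.X}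
    let S := Ideal.Quotient.mk I Polynomial.X
    let q := Ideal.Quotient.mk I (Polynomial.C RatFunc.X)
    let s := S + S ^ 2
    s ^ 3 - 3 * q * s - q - q ^ 2 = 0 ∧ (1 - q) * S = 2 * q + s - s ^ 2 := by
  intro I S q s
  have hS : S ^ 3 = q := Ideal.Quotient.mk_X_pow_eq_mk_C 3 RatFunc.X
  exact ⟨add_sq_cubic_relation_of_pow_three_eq hS, one_sub_mul_eq_of_pow_three_eq hS⟩
end

section
/- The polynomial X³ − 3q·X − (q + q²) is irreducible in ℂ(q)[X], where ℂ(q) is the field of rational functions in one indeterminate q over ℂ. -/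
/-!
Over `ℂ[q]` the cubic is Eisenstein at the prime `q`: `q` divides both `3q` and `q + q²`, while
`q²` does not divide `q + q²`. Being monic, it stays irreducible over the fraction field `ℂ(q)`
by Gauss's lemma.
-/

open Polynomial

section DepressedCubic

variable {R : Type*} [CommRing R]

theorem natDegree_X_pow_three_sub_C_mul_X_sub_C [Nontrivial R] (a b : R) :
    (X ^ 3 - C a * X - C b).natDegree = 3 := by
  compute_degree!

theorem monic_X_pow_three_sub_C_mul_X_sub_C (a b : R) : (X ^ 3 - C a * X - C b).Monic := by
  monicity!

theorem map_X_pow_three_sub_C_mul_X_sub_C {S : Type*} [CommRing S] (f : R →+* S) (a b : R) :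
    (X ^ 3 - C a * X - C b).map f = X ^ 3 - C (f a) * X - C (f b) := by
  simp only [Polynomial.map_sub, Polynomial.map_mul, Polynomial.map_pow, map_X, map_C]

theorem isEisensteinAt_X_pow_three_sub_C_mul_X_sub_C {P : Ideal R} (hP : P ≠ ⊤) {a b : R}
    (ha : a ∈ P) (hb : b ∈ P) (hb2 : b ∉ P ^ 2) :
    (X ^ 3 - C a * X - C b).IsEisensteinAt P := by
  have : Nontrivial R := ⟨0, 1, fun h => hP (P.eq_top_iff_one.mpr (h ▸ P.zero_mem))⟩
  refine (monic_X_pow_three_sub_C_mul_X_sub_C a b).isEisensteinAt_of_mem_of_notMem hP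
    (fun {n} hn => ?_) ?_
  · rw [natDegree_X_pow_three_sub_C_mul_X_sub_C] at hn
    interval_cases n <;> simp [coeff_X, coeff_C, ha, hb, P.neg_mem_iff]
  · simpa [coeff_X, coeff_C] using hb2

theorem irreducible_X_pow_three_sub_C_mul_X_sub_C [IsDomain R] {P : Ideal R} (hP : P.IsPrime)
    {a b : R} (ha : a ∈ P) (hb : b ∈ P) (hb2 : b ∉ P ^ 2) :
    Irreducible (X ^ 3 - C a * X - C b) :=
  (isEisensteinAt_X_pow_three_sub_C_mul_X_sub_C hP.ne_top ha hb hb2).irreducible hP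
    (monic_X_pow_three_sub_C_mul_X_sub_C a b).isPrimitive
    (by rw [natDegree_X_pow_three_sub_C_mul_X_sub_C]; norm_num)

end DepressedCubic

theorem X_add_X_sq_notMem_span_X_pow_two {K : Type*} [Field K] :
    (X + X ^ 2 : K[X]) ∉ Ideal.span {X} ^ 2 := by
  rw [Ideal.span_singleton_pow, Ideal.mem_span_singleton, dvd_add_left (dvd_refl _)]
  intro h
  simpa using natDegree_le_of_dvd h X_ne_zero

/-- The polynomial `X³ - 3qX - (q + q²)` is irreducible over the field `ℂ(q)` of
rational functions in one indeterminate `q` over `ℂ`. -/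
theorem dual_poly_irreducible_su3 :
    Irreducible (Polynomial.X ^ 3 - Polynomial.C (3 * RatFunc.X) * Polynomial.X
      - Polynomial.C (RatFunc.X + RatFunc.X ^ 2) : Polynomial (RatFunc ℂ)) := by
  have hX : (Ideal.span {X} : Ideal ℂ[X]).IsPrime :=
    (Ideal.span_singleton_prime X_ne_zero).mpr prime_X
  have hEisenstein := irreducible_X_pow_three_sub_C_mul_X_sub_C hX
    (Ideal.mem_span_singleton.mpr (dvd_mul_left X 3))
    (Ideal.mem_span_singleton.mpr (dvd_add (dvd_refl X) (dvd_pow_self X two_ne_zero)))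
    X_add_X_sq_notMem_span_X_pow_two
  have hGauss := (monic_X_pow_three_sub_C_mul_X_sub_C _ _)
    |>.irreducible_iff_irreducible_map_fraction_map (K := RatFunc ℂ) |>.mp hEisenstein
  rw [map_X_pow_three_sub_C_mul_X_sub_C] at hGauss
  simpa only [map_mul, map_add, map_pow, map_ofNat, RatFunc.algebraMap_X] using hGauss
end

section
/- The polynomial X³ + μm·X² + μ³q is irreducible in ℂ(μ,m,q)[X], where ℂ(μ,m,q) is the field of rational functions in three independent indeterminates μ, m, q over ℂ. -/
/-!
Eisenstein's criterion at the prime ideal `𝔭 = (m, q)` of `ℂ[μ, m, q]`, the kernel of setting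
`m = q = 0`: the lower coefficients `μm` and `μ³q` lie in `𝔭`, while `μ³q ∉ 𝔭²` because setting
`μ = 1` maps `𝔭` into the ideal of all variables and `μ³q` to `q`, which has degree one.
Gauss's lemma for the integrally closed ring `ℂ[μ, m, q]` then gives irreducibility over its
fraction field.
-/

namespace MvPolynomial

variable {σ R : Type*} [CommRing R]

theorem sub_aeval_indicator_compl_mem_span_X_image (s : Set σ) (p : MvPolynomial σ R) :
    p - aeval (sᶜ.indicator X) p ∈ Ideal.span (X '' s) := by
  induction p using MvPolynomial.induction_on with
  | C a => simp
  | add p q hp hq => simpa [add_sub_add_comm] using add_mem hp hq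
  | mul_X p i hp =>
    by_cases hi : i ∈ s
    · simpa [Set.indicator_of_notMem (Set.notMem_compl_iff.2 hi)] using
        Ideal.mul_mem_left _ p (Ideal.subset_span (Set.mem_image_of_mem X hi))
    · simpa [Set.indicator_of_mem (Set.mem_compl hi), sub_mul] using
        Ideal.mul_mem_right (X i) _ hp

theorem ker_aeval_indicator_compl (s : Set σ) :
    RingHom.ker (aeval (sᶜ.indicator (X (R := R)))) = Ideal.span (X (R := R) '' s) := by
  refine le_antisymm (fun p hp => ?_) ?_
  · have hp0 : aeval (sᶜ.indicator (X (R := R))) p = 0 := hp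
    simpa only [hp0, sub_zero] using sub_aeval_indicator_compl_mem_span_X_image s p
  · rw [Ideal.span_le]
    rintro _ ⟨i, hi, rfl⟩
    simp [Set.indicator_of_notMem (Set.notMem_compl_iff.2 hi)]

theorem isPrime_span_X_image [IsDomain R] (s : Set σ) :
    (Ideal.span (X (R := R) '' s)).IsPrime := by
  rw [← ker_aeval_indicator_compl]
  exact RingHom.ker_isPrime _

theorem aeval_mulIndicator_mem_pow_idealOfVars {s : Set σ} {n : ℕ} {p : MvPolynomial σ R}
    (hp : p ∈ Ideal.span (X (R := R) '' s) ^ n) :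
    aeval (s.mulIndicator X) p ∈ idealOfVars σ R ^ n := by
  have hle : (Ideal.span (X (R := R) '' s)).map (aeval (s.mulIndicator (X (R := R)))) ≤
      idealOfVars σ R := by
    rw [Ideal.map_span, Ideal.span_le]
    rintro _ ⟨_, ⟨i, hi, rfl⟩, rfl⟩
    simpa [Set.mulIndicator_of_mem hi] using Ideal.subset_span (Set.mem_range_self i)
  have hmap := Ideal.mem_map_of_mem (aeval (s.mulIndicator (X (R := R)))) hp
  rw [Ideal.map_pow] at hmap
  exact Ideal.pow_right_mono hle n hmap

end MvPolynomial

namespace Polynomial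

variable {A : Type*} [CommRing A] {n k : ℕ} {a b : A}

theorem degree_C_mul_X_pow_add_C_lt (hkn : k < n) :
    (C a * X ^ k + C b).degree < (n : WithBot ℕ) :=
  (degree_add_le _ _).trans_lt <| max_lt ((degree_C_mul_X_pow_le k a).trans_lt
    (by exact_mod_cast hkn)) (degree_C_le.trans_lt (by exact_mod_cast hkn.pos))

theorem monic_X_pow_add_C_mul_X_pow_add_C (hkn : k < n) :
    (X ^ n + C a * X ^ k + C b).Monic := by
  rw [add_assoc]
  exact monic_X_pow_add (degree_C_mul_X_pow_add_C_lt hkn)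

theorem natDegree_X_pow_add_C_mul_X_pow_add_C [Nontrivial A] (hkn : k < n) :
    (X ^ n + C a * X ^ k + C b).natDegree = n := by
  rw [add_assoc, natDegree_add_eq_left_of_degree_lt] <;>
    simp [degree_C_mul_X_pow_add_C_lt hkn]

theorem isEisensteinAt_X_pow_add_C_mul_X_pow_add_C {P : Ideal A} (hP : P ≠ ⊤) (hk : k ≠ 0)
    (hkn : k < n) (ha : a ∈ P) (hb : b ∈ P) (hb2 : b ∉ P ^ 2) :
    (X ^ n + C a * X ^ k + C b).IsEisensteinAt P := by
  have : Nontrivial A :=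
    nontrivial_of_ne 0 1 fun h => hP ((Ideal.eq_top_iff_one P).2 (h ▸ P.zero_mem))
  refine ⟨?_, fun {i} hi => ?_, ?_⟩
  · rw [(monic_X_pow_add_C_mul_X_pow_add_C hkn).leadingCoeff]
    exact (Ideal.ne_top_iff_one P).1 hP
  · rw [natDegree_X_pow_add_C_mul_X_pow_add_C hkn] at hi
    simp only [coeff_add, coeff_X_pow, coeff_C_mul, coeff_C, if_neg hi.ne]
    refine add_mem (add_mem P.zero_mem ?_) ?_ <;> split_ifs <;> simp [ha, hb]
  · simpa [coeff_X_pow, coeff_C, hk.symm, hkn.pos.ne] using hb2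

theorem irreducible_map_X_pow_add_C_mul_X_pow_add_C [IsDomain A] [IsIntegrallyClosed A]
    {K : Type*} [Field K] [Algebra A K] [IsFractionRing A K] {P : Ideal A} (hP : P.IsPrime)
    (hk : k ≠ 0) (hkn : k < n) (ha : a ∈ P) (hb : b ∈ P) (hb2 : b ∉ P ^ 2) :
    Irreducible (X ^ n + C (algebraMap A K a) * X ^ k + C (algebraMap A K b)) := by
  have hmonic := monic_X_pow_add_C_mul_X_pow_add_C (a := a) (b := b) hkn
  have hirr := (isEisensteinAt_X_pow_add_C_mul_X_pow_add_C hP.ne_top hk hkn ha hb hb2).irreducible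
    hP hmonic.isPrimitive (by rw [natDegree_X_pow_add_C_mul_X_pow_add_C hkn]; exact hkn.pos)
  simpa using (hmonic.irreducible_iff_irreducible_map_fraction_map (K := K)).1 hirr

end Polynomial

open MvPolynomial in
/-- The polynomial `X³ + μm·X² + μ³q` is irreducible over the field `ℂ(μ,m,q)`
of rational functions in three independent indeterminates `μ, m, q` over `ℂ`
(realized as the fraction field of `ℂ[μ,m,q]`). -/
theorem meson_poly_irreducible_U2 :
    let R := MvPolynomial (Fin 3) ℂ
    let K := FractionRing R
    let μ : K := algebraMap R K (MvPolynomial.X 0)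
    let m : K := algebraMap R K (MvPolynomial.X 1)
    let q : K := algebraMap R K (MvPolynomial.X 2)
    Irreducible (Polynomial.X ^ 3 + Polynomial.C (μ * m) * Polynomial.X ^ 2
      + Polynomial.C (μ ^ 3 * q) : Polynomial K) := by
  intro R K μ m q
  let P : Ideal R := Ideal.span (X '' {1, 2})
  have hX1 : X 1 ∈ P := Ideal.subset_span ⟨1, by simp, rfl⟩
  have hX2 : X 2 ∈ P := Ideal.subset_span ⟨2, by simp, rfl⟩
  have hsq : X 0 ^ 3 * X 2 ∉ P ^ 2 := by
    intro h
    have hq : aeval (({1, 2} : Set (Fin 3)).mulIndicator (X (R := ℂ))) (X 0 ^ 3 * X 2 : R) =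
        X 2 := by
      simp [Set.mulIndicator_of_notMem, Set.mulIndicator_of_mem]
    have hq2 := hq ▸ aeval_mulIndicator_mem_pow_idealOfVars h
    rw [MvPolynomial.X, monomial_mem_pow_idealOfVars_iff _ _ one_ne_zero] at hq2
    simp at hq2
  simpa [μ, m, q] using Polynomial.irreducible_map_X_pow_add_C_mul_X_pow_add_C (K := K)
    (isPrime_span_X_image _) two_ne_zero (by norm_num : 2 < 3)
    (P.mul_mem_left (X 0) hX1) (P.mul_mem_left (X 0 ^ 3) hX2) hsq
end

section
/- The polynomial X³ + μ²mq·X + μ³q² is irreducible in ℂ(μ,m,q)[X], where ℂ(μ,m,q) is the field of rational functions in three independent indeterminates μ, m, q over ℂ. -/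
/-!
A root in `ℂ(μ,m,q)` of the monic cubic is integral over the integrally closed ring
`ℂ[μ,m,q]`, hence lies in it, and a cubic without roots is irreducible. Specialising
`μ ↦ 1, m ↦ 0` turns a root in `ℂ[μ,m,q]` into some `s ∈ ℂ[q]` with `s³ = -q²`,
impossible by degree since `3 ∤ 2`.
-/

open Polynomial

theorem Polynomial.Monic.not_isRoot_map_of_forall_not_isRoot {R K : Type*} [CommRing R]
    [IsIntegrallyClosed R] [Field K] [Algebra R K] [IsFractionRing R K] {p : R[X]}
    (hp : p.Monic) (h : ∀ r, ¬ p.IsRoot r) (x : K) : ¬ (p.map (algebraMap R K)).IsRoot x := by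
  intro hx
  rw [IsRoot, eval_map_algebraMap] at hx
  obtain ⟨r, rfl⟩ := IsIntegrallyClosed.isIntegral_iff.mp ⟨p, hp, hx⟩
  rw [aeval_algebraMap_apply, map_eq_zero_iff _ (IsFractionRing.injective R K)] at hx
  exact h r hx

theorem Polynomial.Monic.irreducible_map_of_forall_not_isRoot {R K : Type*} [CommRing R]
    [IsIntegrallyClosed R] [Field K] [Algebra R K] [IsFractionRing R K] {p : R[X]}
    (hp : p.Monic) (hdeg : p.natDegree ∈ Finset.Icc 1 3) (h : ∀ r, ¬ p.IsRoot r) :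
    Irreducible (p.map (algebraMap R K)) :=
  irreducible_of_degree_le_three_of_not_isRoot (by rwa [hp.natDegree_map])
    (hp.not_isRoot_map_of_forall_not_isRoot h)

theorem Polynomial.pow_add_X_pow_ne_zero_of_not_dvd {R : Type*} [CommRing R] [IsDomain R]
    {n k : ℕ} (hnk : ¬ n ∣ k) (s : R[X]) : s ^ n + X ^ k ≠ 0 := by
  intro h
  have hdeg := congrArg natDegree (eq_neg_of_add_eq_zero_left h)
  rw [natDegree_pow, natDegree_neg, natDegree_X_pow] at hdeg
  exact hnk ⟨s.natDegree, hdeg.symm⟩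

noncomputable def glueballPoly : (MvPolynomial (Fin 3) ℂ)[X] :=
  X ^ 3 + C (.X 0 ^ 2 * .X 1 * .X 2) * X + C (.X 0 ^ 3 * .X 2 ^ 2)

theorem glueballPoly_monic : glueballPoly.Monic := by
  unfold glueballPoly; monicity!

theorem glueballPoly_natDegree : glueballPoly.natDegree = 3 := by
  unfold glueballPoly; compute_degree!

theorem glueballPoly_not_isRoot (r : MvPolynomial (Fin 3) ℂ) : ¬ glueballPoly.IsRoot r := by
  intro hr
  have hspec := congrArg (MvPolynomial.aeval ![(1 : ℂ[X]), 0, X]) hr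
  exact pow_add_X_pow_ne_zero_of_not_dvd (n := 3) (k := 2) (by norm_num) _
    (by simpa [glueballPoly] using hspec)

/-- The polynomial `X³ + μ²mq·X + μ³q²` is irreducible over the field `ℂ(μ,m,q)`
of rational functions in three independent indeterminates `μ, m, q` over `ℂ`.
This implies that the confining and Higgs vacua of the U(2) theory with one
flavor are in the same phase. -/
theorem glueball_poly_irreducible_U2 :
    let R := MvPolynomial (Fin 3) ℂ
    let K := FractionRing R
    let μ : K := algebraMap R K (MvPolynomial.X 0)
    let m : K := algebraMap R K (MvPolynomial.X 1)
    let q : K := algebraMap R K (MvPolynomial.X 2)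
    Irreducible (Polynomial.X ^ 3 + Polynomial.C (μ ^ 2 * m * q) * Polynomial.X
      + Polynomial.C (μ ^ 3 * q ^ 2) : Polynomial K) := by
  intro R K μ m q
  have hmap : glueballPoly.map (algebraMap R K) =
      X ^ 3 + C (μ ^ 2 * m * q) * X + C (μ ^ 3 * q ^ 2) := by
    simp [glueballPoly, μ, m, q]
  rw [← hmap]
  exact glueballPoly_monic.irreducible_map_of_forall_not_isRoot
    (by simp [glueballPoly_natDegree]) glueballPoly_not_isRoot
end

section
/- Let n ≥ 1 and let h₁,…,h_n ∈ ℂ. Define the Newton sums N_j = Σ_{i=1}^{n} h_i^j for j ≥ 0 (so N₀ = n). Then for every integer k with 0 ≤ k ≤ n−1, the determinant of the (n−k)×(n−k) Hermite matrix H^{(k)} = (N_{i+j−2})_{1≤i,j≤n−k} equals Σ_I Π_{i<j, i,j∈I} (h_i − h_j)², where the sum runs over the C(n,k) subsets I ⊆ {1,…,n} of cardinality n−k. -/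
/-!
The Hermite matrix is the Gram matrix `Wᵀ W` of the truncated Vandermonde matrix
`W = (h_l ^ j)`, with `n` rows and `n - k` columns. By Cauchy–Binet, `det (Wᵀ W)` is the sum
of the squared maximal minors of `W`, one for each set of `n - k` rows; the minor on the rows
`I` is the Vandermonde determinant of `(h_i)_{i ∈ I}`, whose square is `∏_{i<j ∈ I} (h_i - h_j)²`.
-/

open Finset Matrix Equiv

section Sorting

variable {ι M : Type*} [LinearOrder ι] {m : ℕ}

theorem Tuple.sort_strictMono_comp {g : Fin m → ι} (hg : StrictMono g) (σ : Perm (Fin m)) :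
    Tuple.sort (g ∘ σ) = σ⁻¹ := by
  refine (Tuple.eq_sort_iff.2 ⟨?_, fun i j hij hgij => ?_⟩).symm
  · simpa [Function.comp_def] using hg.monotone
  · simp only [Perm.coe_inv, Function.comp_apply, apply_symm_apply] at hgij
    exact absurd (hg.injective hgij) hij.ne

/-- Every injective tuple is uniquely a strictly increasing tuple composed with a permutation. -/
theorem Finset.sum_injective_eq_sum_strictMono_sum_perm [Fintype ι] [AddCommMonoid M]
    (F : (Fin m → ι) → M) :
    ∑ p with Function.Injective p, F p
      = ∑ g with StrictMono g, ∑ σ : Perm (Fin m), F (g ∘ σ) := by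
  rw [← sum_product']
  refine sum_nbij' (fun p => (p ∘ Tuple.sort p, (Tuple.sort p)⁻¹)) (fun x => x.1 ∘ x.2)
    ?_ ?_ ?_ ?_ ?_
  · simp only [mem_filter, mem_univ, true_and, mem_product, and_true]
    exact fun p hp =>
      (Tuple.monotone_sort p).strictMono_of_injective (hp.comp (Tuple.sort p).injective)
  · simp only [mem_filter, mem_univ, true_and, mem_product, and_true]
    exact fun x hx => hx.injective.comp x.2.injective
  · intro p _
    ext i
    simp
  · rintro ⟨g, σ⟩ hg
    simp only [mem_product, mem_filter, mem_univ, true_and, and_true] at hg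
    simp [Tuple.sort_strictMono_comp hg, Function.comp_assoc]
  · intro p _
    simp [Function.comp_assoc]

theorem Finset.sum_strictMono_image_eq_sum_powersetCard [Fintype ι] [AddCommMonoid M]
    (F : Finset ι → M) :
    ∑ g : Fin m → ι with StrictMono g, F (image g univ) = ∑ s ∈ powersetCard m univ, F s := by
  have image_eq : (univ.filter (StrictMono : (Fin m → ι) → Prop)).image (fun g => image g univ)
      = powersetCard m univ := by
    ext s
    simp only [mem_image, mem_filter, mem_univ, true_and, mem_powersetCard_univ]
    constructor
    · rintro ⟨g, hg, rfl⟩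
      rw [card_image_of_injective _ hg.injective, card_univ, Fintype.card_fin]
    · exact fun hs =>
        ⟨s.orderEmbOfFin hs, (s.orderEmbOfFin hs).strictMono, image_orderEmbOfFin_univ s hs⟩
  rw [← image_eq, sum_image]
  intro g₁ hg₁ g₂ hg₂ himage
  simp only [coe_filter, mem_univ, true_and, Set.mem_ofPred_eq] at hg₁ hg₂
  refine (hg₁.range_inj hg₂).mp ?_
  simpa [← coe_inj, coe_image] using himage

theorem StrictMono.prod_prod_Ioi_comp [CommMonoid M] {g : Fin m → ι} (hg : StrictMono g)
    (f : ι → ι → M) :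
    ∏ i, ∏ j ∈ Ioi i, f (g i) (g j)
      = ∏ a ∈ image g univ, ∏ b ∈ (image g univ).filter (a < ·), f a b := by
  rw [prod_image fun i _ j _ hij => hg.injective hij]
  refine prod_congr rfl fun i _ => ?_
  rw [filter_image, prod_image fun i _ j _ hij => hg.injective hij]
  congr 1
  ext j
  simp [hg.lt_iff_lt]

end Sorting

namespace Matrix

variable {R ι : Type*} [CommRing R] {m : ℕ}

theorem det_mul_eq_sum_prod_mul_det_submatrix [Fintype ι]
    (A : Matrix (Fin m) ι R) (B : Matrix ι (Fin m) R) :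
    (A * B).det = ∑ p : Fin m → ι, (∏ i, A i (p i)) * (B.submatrix p id).det := by
  have rows : A * B = fun i => ∑ l, A i l • B l := by
    ext i j
    simp [mul_apply, Finset.sum_apply]
  rw [rows]
  exact (detRowAlternating.map_sum _).trans
    (sum_congr rfl fun p _ => detRowAlternating.map_smul_univ _ _)

theorem sum_perm_prod_mul_det_submatrix_comp (A : Matrix (Fin m) ι R) (B : Matrix ι (Fin m) R)
    (g : Fin m → ι) :
    ∑ σ : Perm (Fin m), (∏ i, A i ((g ∘ σ) i)) * (B.submatrix (g ∘ σ) id).det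
      = (A.submatrix id g).det * (B.submatrix g id).det := by
  have det_B_comp (σ : Perm (Fin m)) :
      (B.submatrix (g ∘ σ) id).det = Perm.sign σ * (B.submatrix g id).det := by
    rw [← det_permute, submatrix_submatrix, Function.comp_id]
  simp_rw [det_B_comp, ← det_transpose (A.submatrix id g), det_apply', sum_mul]
  refine sum_congr rfl fun σ _ => ?_
  simp only [transpose_apply, submatrix_apply, id, Function.comp_apply]
  ring

/-- The Cauchy–Binet formula. -/
theorem det_mul_eq_sum_strictMono [Fintype ι] [LinearOrder ι]
    (A : Matrix (Fin m) ι R) (B : Matrix ι (Fin m) R) :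
    (A * B).det
      = ∑ g : Fin m → ι with StrictMono g, (A.submatrix id g).det * (B.submatrix g id).det := by
  have det_eq_zero (p : Fin m → ι) (hp : ¬Function.Injective p) : (B.submatrix p id).det = 0 :=
    detRowAlternating.map_eq_zero_of_not_injective _
      fun h => hp (Function.Injective.of_comp (f := B) h)
  calc (A * B).det
      = ∑ p : Fin m → ι, (∏ i, A i (p i)) * (B.submatrix p id).det :=
        det_mul_eq_sum_prod_mul_det_submatrix A B
    _ = ∑ p with Function.Injective p, (∏ i, A i (p i)) * (B.submatrix p id).det :=
        (sum_filter_of_ne fun p _ hp =>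
          by_contra fun hinj => hp (by rw [det_eq_zero p hinj, mul_zero])).symm
    _ = _ := by
      rw [sum_injective_eq_sum_strictMono_sum_perm]
      exact sum_congr rfl fun g _ => sum_perm_prod_mul_det_submatrix_comp A B g

theorem det_transpose_mul_self_eq_sum_strictMono_sq [Fintype ι] [LinearOrder ι]
    (A : Matrix ι (Fin m) R) :
    (Aᵀ * A).det = ∑ g : Fin m → ι with StrictMono g, (A.submatrix g id).det ^ 2 := by
  rw [det_mul_eq_sum_strictMono]
  refine sum_congr rfl fun g _ => ?_
  rw [← transpose_submatrix, det_transpose, sq]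

theorem det_vandermonde_sq (v : Fin m → R) :
    (vandermonde v).det ^ 2 = ∏ i, ∏ j ∈ Ioi i, (v i - v j) ^ 2 := by
  simp_rw [det_vandermonde, ← prod_pow, sub_sq_comm]

end Matrix

theorem hermite_det_eq_subdiscriminant_general (n : ℕ) (h : Fin n → ℂ)
    (k : ℕ) :
    Matrix.det (Matrix.of fun i j : Fin (n - k) => ∑ l : Fin n, h l ^ ((i : ℕ) + (j : ℕ)))
      = ∑ I ∈ Finset.powersetCard (n - k) (Finset.univ : Finset (Fin n)),
          ∏ i ∈ I, ∏ j ∈ I.filter (fun j => i < j), (h i - h j) ^ 2 := by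
  let W : Matrix (Fin n) (Fin (n - k)) ℂ := of fun l j => h l ^ (j : ℕ)
  have hermite_eq_gram :
      (of fun i j : Fin (n - k) => ∑ l : Fin n, h l ^ ((i : ℕ) + (j : ℕ))) = Wᵀ * W := by
    ext i j
    simp [W, mul_apply, pow_add]
  rw [hermite_eq_gram, det_transpose_mul_self_eq_sum_strictMono_sq,
    ← sum_strictMono_image_eq_sum_powersetCard]
  refine sum_congr rfl fun g hg => ?_
  rw [show W.submatrix g id = vandermonde (h ∘ g) from rfl, det_vandermonde_sq]
  exact (mem_filter.1 hg).2.prod_prod_Ioi_comp fun a b => (h a - h b) ^ 2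

/-- Subdiscriminants as determinants of Hermite matrices.  For `h₁, …, h_n ∈ ℂ`
with Newton sums `N_j = Σ_i h_i^j`, and `0 ≤ k ≤ n - 1`, the determinant of the
`(n-k) × (n-k)` Hermite matrix `(N_{i+j-2})_{1 ≤ i,j ≤ n-k}` equals the sum,
over the subsets `I ⊆ {1, …, n}` of cardinality `n - k`, of
`Π_{i<j ∈ I} (h_i - h_j)²`. -/
theorem hermite_det_eq_subdiscriminant (n : ℕ) (hn : 1 ≤ n) (h : Fin n → ℂ)
    (k : ℕ) (hk : k ≤ n - 1) :
    Matrix.det (Matrix.of fun i j : Fin (n - k) => ∑ l : Fin n, h l ^ ((i : ℕ) + (j : ℕ)))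
      = ∑ I ∈ Finset.powersetCard (n - k) (Finset.univ : Finset (Fin n)),
          ∏ i ∈ I, ∏ j ∈ I.filter (fun j => i < j), (h i - h j) ^ 2 :=
  hermite_det_eq_subdiscriminant_general n h k
end

section
/- Let n ≥ 2 and h₁,…,h_n ∈ ℂ, and for 0 ≤ k ≤ n−1 define the k-th subdiscriminant Δ^{(k)} = Σ_{I⊆{1,…,n}, |I|=n−k} Π_{i<j, i,j∈I} (h_i − h_j)². Then for every integer p with 1 ≤ p ≤ n−1, the conditions Δ^{(0)} = Δ^{(1)} = ⋯ = Δ^{(p−1)} = 0 hold if and only if the number of distinct values among h₁,…,h_n is at most n − p (equivalently, the monic polynomial Π_{i=1}^{n}(X − h_i) has at least p double roots, where a root of multiplicity m is counted as m−1 double roots). -/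
/-!
A term `∏_{i<j ∈ I} (h i - h j)²` vanishes exactly when `h` is not injective on `I`, so
`Δ^(k) = 0` as soon as `n - k` exceeds the number `m` of distinct values of `h`. In `Δ^(n-m)` the
surviving terms are indexed by the transversals of the fibres of `h`; read as products over
unordered pairs, they all equal the product of `(a - b)²` over pairs of distinct values, which is
nonzero. Their sum is a positive integer multiple of it, hence nonzero in characteristic zero.
-/

open Finset

variable {ι R : Type*}

theorem Finset.prod_sym2_filter_not_isDiag {M : Type*} [LinearOrder ι] [CommMonoid M]
    (s : Finset ι) (p : Sym2 ι → M) :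
    ∏ i ∈ s.sym2 with ¬ i.IsDiag, p i = ∏ i ∈ s.offDiag with i.1 < i.2, p s(i.1, i.2) :=
  sum_sym2_filter_not_isDiag (M := Additive M) s p

theorem Finset.prod_prod_filter_lt_eq_prod_sym2 {M : Type*} [LinearOrder ι] [CommMonoid M]
    (s : Finset ι) (p : Sym2 ι → M) :
    ∏ i ∈ s, ∏ j ∈ s with i < j, p s(i, j) = ∏ z ∈ s.sym2 with ¬ z.IsDiag, p z := by
  rw [prod_sym2_filter_not_isDiag, prod_finset_product _ s fun i => s.filter (i < ·)]
  rintro ⟨i, j⟩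
  simp only [mem_filter, mem_offDiag]
  constructor
  · rintro ⟨⟨hi, hj, -⟩, hij⟩; exact ⟨hi, hj, hij⟩
  · rintro ⟨hi, hj, hij⟩; exact ⟨⟨hi, hj, hij.ne⟩, hij⟩

theorem Set.InjOn.sym2_map {β : Type*} {f : ι → β} {s : Set ι} (hf : Set.InjOn f s) :
    Set.InjOn (Sym2.map f) s.sym2 := by
  rintro ⟨a, b⟩ hab ⟨c, d⟩ hcd heq
  simp only [Set.mk_mem_sym2_iff] at hab hcd
  simp only [Sym2.map_mk, Sym2.eq_iff] at heq ⊢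
  rcases heq with ⟨h1, h2⟩ | ⟨h1, h2⟩
  · exact .inl ⟨hf hab.1 hcd.1 h1, hf hab.2 hcd.2 h2⟩
  · exact .inr ⟨hf hab.1 hcd.2 h1, hf hab.2 hcd.1 h2⟩

theorem Set.InjOn.isDiag_sym2_map_iff {β : Type*} {f : ι → β} {s : Set ι} (hf : Set.InjOn f s)
    {z : Sym2 ι} (hz : z ∈ s.sym2) : (z.map f).IsDiag ↔ z.IsDiag := by
  induction z with
  | _ a b =>
    rw [Set.mk_mem_sym2_iff] at hz
    simp only [Sym2.map_mk, Sym2.mk_isDiag_iff]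
    exact hf.eq_iff hz.1 hz.2

theorem Finset.exists_subset_injOn_image_eq {β : Type*} [DecidableEq β] (s : Finset ι)
    (f : ι → β) : ∃ t ⊆ s, Set.InjOn f t ∧ t.image f = s.image f := by
  obtain ⟨u, hus, hbij⟩ := Set.exists_subset_bijOn (s : Set ι) f
  lift u to Finset ι using s.finite_toSet.subset hus
  refine ⟨u, mod_cast hus, hbij.injOn, ?_⟩
  exact_mod_cast hbij.image_eq

def sqDiff [CommRing R] : Sym2 R → R :=
  Sym2.lift ⟨fun a b => (a - b) ^ 2, fun a b => by ring⟩

@[simp] theorem sqDiff_mk [CommRing R] (a b : R) : sqDiff s(a, b) = (a - b) ^ 2 := rfl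

def setDiscr [CommRing R] [DecidableEq R] (S : Finset R) : R :=
  ∏ z ∈ S.sym2 with ¬ z.IsDiag, sqDiff z

theorem setDiscr_ne_zero [CommRing R] [IsDomain R] [DecidableEq R] (S : Finset R) :
    setDiscr S ≠ 0 := by
  refine prod_ne_zero_iff.2 fun z hz => ?_
  induction z with
  | _ a b =>
    have hab : a ≠ b := by simpa using (mem_filter.1 hz).2
    exact pow_ne_zero 2 (sub_ne_zero.2 hab)

/-- The discriminant of `∏_{i ∈ I} (X - h i)`; the subdiscriminant `Δ^(k)` is its sum over
`#I = n - k`. -/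
def discrOn [LinearOrder ι] [CommRing R] (h : ι → R) (I : Finset ι) : R :=
  ∏ i ∈ I, ∏ j ∈ I with i < j, (h i - h j) ^ 2

section discrOn

variable [LinearOrder ι] [CommRing R] (h : ι → R)

theorem discrOn_eq_prod_sym2 (I : Finset ι) :
    discrOn h I = ∏ z ∈ I.sym2 with ¬ z.IsDiag, sqDiff (z.map h) :=
  prod_prod_filter_lt_eq_prod_sym2 I fun z => sqDiff (z.map h)

theorem discrOn_eq_zero_of_not_injOn {I : Finset ι} (hI : ¬ Set.InjOn h I) :
    discrOn h I = 0 := by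
  obtain ⟨i, hi, j, hj, hij, hne⟩ : ∃ i ∈ I, ∃ j ∈ I, h i = h j ∧ i ≠ j := by
    simpa [Set.InjOn] using hI
  rw [discrOn_eq_prod_sym2]
  refine prod_eq_zero (i := s(i, j)) ?_ (by simp [hij])
  simp [hi, hj, hne]

theorem discrOn_eq_setDiscr_image [DecidableEq R] {I : Finset ι} (hI : Set.InjOn h I) :
    discrOn h I = setDiscr (I.image h) := by
  have hsym2 : Set.InjOn (Sym2.map h) (I.sym2 : Set (Sym2 ι)) := by
    rw [coe_sym2]; exact hI.sym2_map
  rw [discrOn_eq_prod_sym2, setDiscr, sym2_image, filter_image,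
    prod_image fun z hz w hw => hsym2 (mem_filter.1 hz).1 (mem_filter.1 hw).1]
  refine prod_congr (filter_congr fun z hz => ?_) fun _ _ => rfl
  rw [hI.isDiag_sym2_map_iff (by rwa [← coe_sym2, mem_coe])]

end discrOn

section subdiscriminant

variable [LinearOrder ι] [CommRing R] [DecidableEq R] (s : Finset ι) (h : ι → R)

theorem sum_powersetCard_discrOn_eq_zero {r : ℕ} (hr : #(s.image h) < r) :
    ∑ I ∈ powersetCard r s, discrOn h I = 0 := by
  refine sum_eq_zero fun I hI => discrOn_eq_zero_of_not_injOn h fun hinj => ?_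
  obtain ⟨hIs, rfl⟩ := mem_powersetCard.1 hI
  have : #(I.image h) ≤ #(s.image h) := card_le_card (image_subset_image hIs)
  rw [card_image_of_injOn hinj] at this
  omega

theorem sum_powersetCard_card_image_discrOn_ne_zero [IsDomain R] [CharZero R] :
    ∑ I ∈ powersetCard #(s.image h) s, discrOn h I ≠ 0 := by
  classical
  have hterm : ∀ I ∈ powersetCard #(s.image h) s,
      discrOn h I = if Set.InjOn h I then setDiscr (s.image h) else 0 := by
    intro I hI
    obtain ⟨hIs, hcard⟩ := mem_powersetCard.1 hI
    split_ifs with hinj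
    · rw [discrOn_eq_setDiscr_image h hinj, eq_of_subset_of_card_le (image_subset_image hIs)
        (by rw [card_image_of_injOn hinj, hcard])]
    · exact discrOn_eq_zero_of_not_injOn h hinj
  have htransversal : ∃ I ∈ powersetCard #(s.image h) s, Set.InjOn h (I : Set ι) := by
    obtain ⟨t, hts, hinj, himage⟩ := s.exists_subset_injOn_image_eq h
    refine ⟨t, mem_powersetCard.2 ⟨hts, ?_⟩, hinj⟩
    rw [← himage, card_image_of_injOn hinj]
  rw [sum_congr rfl hterm, ← sum_filter, sum_const, nsmul_eq_mul]
  refine mul_ne_zero (Nat.cast_ne_zero.2 (card_pos.2 ?_).ne') (setDiscr_ne_zero _)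
  exact htransversal.imp fun I hI => mem_filter.2 hI

end subdiscriminant

theorem subdiscriminants_vanish_iff_double_roots_general (n : ℕ) (h : Fin n → ℂ)
    (p : ℕ) (hp2 : p ≤ n - 1) :
    (∀ k < p, ∑ I ∈ Finset.powersetCard (n - k) (Finset.univ : Finset (Fin n)),
        ∏ i ∈ I, ∏ j ∈ I.filter (fun j => i < j), (h i - h j) ^ 2 = 0)
      ↔ (Finset.univ.image h).card ≤ n - p := by
  classical
  change (∀ k < p, ∑ I ∈ powersetCard (n - k) univ, discrOn h I = 0) ↔ _
  have hcard : #(univ.image h) ≤ n := card_image_le.trans_eq (card_fin n)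
  constructor
  · intro hvanish
    by_contra! hgt
    have hzero := hvanish (n - #(univ.image h)) (by omega)
    rw [Nat.sub_sub_self hcard] at hzero
    exact sum_powersetCard_card_image_discrOn_ne_zero univ h hzero
  · intro hle k hk
    exact sum_powersetCard_discrOn_eq_zero univ h (by omega)

/-- Vanishing of the first `p` subdiscriminants
`Δ^(k) = Σ_{I ⊆ {1,…,n}, |I| = n-k} Π_{i<j ∈ I} (h_i - h_j)²` for `0 ≤ k < p`
is equivalent to the polynomial `Π (X - h_i)` having at least `p` double roots,
i.e. to the number of distinct values among `h₁, …, h_n` being at most `n - p`. -/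
theorem subdiscriminants_vanish_iff_double_roots (n : ℕ) (hn : 2 ≤ n) (h : Fin n → ℂ)
    (p : ℕ) (hp1 : 1 ≤ p) (hp2 : p ≤ n - 1) :
    (∀ k < p, ∑ I ∈ Finset.powersetCard (n - k) (Finset.univ : Finset (Fin n)),
        ∏ i ∈ I, ∏ j ∈ I.filter (fun j => i < j), (h i - h j) ^ 2 = 0)
      ↔ (Finset.univ.image h).card ≤ n - p :=
  subdiscriminants_vanish_iff_double_roots_general n h p hp2
end

section
/- Let K be a field of characteristic zero, let u ∈ K be nonzero, and let N, r be integers with N/2 ≤ r ≤ N−1. Suppose W, P, Δ, M, C ∈ K[z] satisfy: W is monic of degree r, P is monic of degree N, deg Δ ≤ r−1, M is monic of degree N−r, C is monic of degree 2r−N, P + 2u = M²·C, and M²·(W² − 4Δ) = P² − 4u². Then W = M·C, Δ = u·C, and P = M²·C − 2u. -/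
/-!
Substituting `P = M²C - 2u` into the second constraint and cancelling `M²` gives
`W² - (MC)² = 4(Δ - uC)`, whose right-hand side has degree `< r`. Since `W` and `MC` are both
monic of degree `r`, the factor `W + MC` has leading coefficient `2` in degree `r`, so the
factor `W - MC` must vanish; then `Δ = uC` as well.
-/

open Polynomial

theorem Polynomial.Monic.eq_of_natDegree_sq_sub_sq_lt {R : Type*} [CommRing R] [IsDomain R]
    [NeZero (2 : R)] {A B : R[X]} (hA : A.Monic) (hB : B.Monic)
    (hdeg : A.natDegree = B.natDegree) (h : (A ^ 2 - B ^ 2).natDegree < A.natDegree) :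
    A = B := by
  by_contra hne
  have hcoeff : (A + B).coeff A.natDegree ≠ 0 := by
    rw [coeff_add, hA.coeff_natDegree, hdeg, hB.coeff_natDegree, one_add_one_eq_two]
    exact two_ne_zero
  have hsum_ne : A + B ≠ 0 := fun h0 => hcoeff (by rw [h0, coeff_zero])
  have hsum : A.natDegree ≤ (A + B).natDegree := le_natDegree_of_ne_zero hcoeff
  rw [sq_sub_sq, Polynomial.natDegree_mul hsum_ne (sub_ne_zero.2 hne)] at h
  omega

theorem factorization_solution_szero_general {K : Type*} [Field K] [CharZero K]
    (u : K) (N r : ℕ) (h1 : N ≤ 2 * r) (h2 : r + 1 ≤ N)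
    (W P Δ M C : Polynomial K)
    (hW : W.Monic) (hWdeg : W.natDegree = r)
    (hΔdeg : Δ.natDegree ≤ r - 1)
    (hM : M.Monic) (hMdeg : M.natDegree = N - r)
    (hC : C.Monic) (hCdeg : C.natDegree = 2 * r - N)
    (hfac1 : P + Polynomial.C (2 * u) = M ^ 2 * C)
    (hfac2 : M ^ 2 * (W ^ 2 - 4 * Δ) = P ^ 2 - Polynomial.C (4 * u ^ 2)) :
    W = M * C ∧ Δ = Polynomial.C u * C ∧ P = M ^ 2 * C - Polynomial.C (2 * u) := by
  simp only [map_mul, map_pow, map_ofNat] at hfac1 hfac2 ⊢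
  have hsq : W ^ 2 - (M * C) ^ 2 = Polynomial.C 4 * (Δ - Polynomial.C u * C) := by
    apply mul_left_cancel₀ (pow_ne_zero 2 hM.ne_zero)
    rw [C_ofNat]
    linear_combination hfac2 + (P + M ^ 2 * C - 2 * Polynomial.C u) * hfac1
  have hsq_deg : (W ^ 2 - (M * C) ^ 2).natDegree < W.natDegree := by
    have hΔC : (Δ - Polynomial.C u * C).natDegree ≤ r - 1 :=
      (natDegree_sub_le _ _).trans <|
        max_le hΔdeg ((natDegree_C_mul_le _ _).trans (by omega))
    rw [hsq]
    exact (natDegree_C_mul_le _ _).trans_lt (by omega)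
  have hMCdeg : W.natDegree = (M * C).natDegree := by
    rw [hM.natDegree_mul hC]
    omega
  have hWMC : W = M * C := hW.eq_of_natDegree_sq_sub_sq_lt (hM.mul hC) hMCdeg hsq_deg
  have hΔ : Δ = Polynomial.C u * C := by
    rw [hWMC, sub_self, eq_comm, mul_eq_zero, sub_eq_zero] at hsq
    exact hsq.resolve_left (by simp)
  exact ⟨hWMC, hΔ, by linear_combination hfac1⟩

/-- Explicit solution of the factorization constraints in the phases with
refined rank `{0, N-r}` of the U(N) theory with one adjoint.  Here `K` is a
field of characteristic zero, `u ≠ 0` plays the role of `q^(1/2)`, and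
`N/2 ≤ r ≤ N - 1`.  If `W` is monic of degree `r`, `P` monic of degree `N`,
`deg Δ ≤ r - 1`, `M` monic of degree `N - r`, `C` monic of degree `2r - N`,
`P + 2u = M²·C` and `M²·(W² - 4Δ) = P² - 4u²`, then `W = M·C`, `Δ = u·C` and
`P = M²·C - 2u`. -/
theorem factorization_solution_szero {K : Type*} [Field K] [CharZero K]
    (u : K) (hu : u ≠ 0) (N r : ℕ) (h1 : N ≤ 2 * r) (h2 : r + 1 ≤ N)
    (W P Δ M C : Polynomial K)
    (hW : W.Monic) (hWdeg : W.natDegree = r)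
    (hP : P.Monic) (hPdeg : P.natDegree = N)
    (hΔdeg : Δ.natDegree ≤ r - 1)
    (hM : M.Monic) (hMdeg : M.natDegree = N - r)
    (hC : C.Monic) (hCdeg : C.natDegree = 2 * r - N)
    (hfac1 : P + Polynomial.C (2 * u) = M ^ 2 * C)
    (hfac2 : M ^ 2 * (W ^ 2 - 4 * Δ) = P ^ 2 - Polynomial.C (4 * u ^ 2)) :
    W = M * C ∧ Δ = Polynomial.C u * C ∧ P = M ^ 2 * C - Polynomial.C (2 * u) :=
  factorization_solution_szero_general u N r h1 h2 W P Δ M C hW hWdeg hΔdeg hM hMdeg hC hCdeg hfac1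
    hfac2
end

section
/- The polynomial P(x) = x¹⁵ + (3qg₁ − qg₂²)x¹² + 15q²x¹⁰ + (12q³g₁ − 4q³g₂²)x⁷ + (−4g₁³q³ − 4g₀g₂³q³ − 27g₀²q³ + g₁²g₂²q³ + 18g₀g₁g₂q³)x⁶ + 48q⁴x⁵ + (−4g₂⁴q⁴ − 36g₁²q⁴ + 24g₁g₂²q⁴)x⁴ + (32q⁵g₂² − 96q⁵g₁)x² − 64q⁶ is irreducible in ℂ(g₀,g₁,g₂,q)[x], where ℂ(g₀,g₁,g₂,q) is the field of rational functions in four independent indeterminates g₀, g₁, g₂, q over ℂ. -/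
/-!
By Gauss's lemma it suffices to prove irreducibility over `ℂ[g₀, g₁, g₂, q]`. Only the
coefficient of `x⁶` involves `g₀`, and it is quadratic in `g₀`, so the Newton polygon with respect
to the `g₀`-degree (the upper hull of the points `(j, deg_{g₀} aⱼ)`) is the triangle with vertices
`(0, 0)`, `(6, 2)`, `(15, 0)`. Faces of the Newton polygon of a product are sums of faces of the
factors, so a monic factor of degree `α` goes from `(0, 0)` to `(α, 0)` along a piece of the edge
of slope `1/3` and then a piece of the edge of slope `-2/9`, meeting at a lattice point `(γ, e)`.
Then `γ = 3e` and `2(α - γ) = 9e`, so `2α = 15e` and `α ∈ {0, 15}`.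
-/

open Polynomial Finset

section NewtonKey

variable {R : Type*} [CommRing R] (m k s : ℤ)

/-- The score of the point `(j, e)` in the direction `(m, k)`; ties are broken by `s * j`, so that
for `s = 1` (resp. `s = -1`) the top score sits at the right (resp. left) end of the face. -/
def newtonScore (e j : ℕ) : ℤ ×ₗ ℤ := toLex (k * e + m * j, s * j)

noncomputable def newtonKey (P : R[X][X]) (j : ℕ) : ℤ ×ₗ ℤ :=
  newtonScore m k s (P.coeff j).natDegree j

noncomputable def newtonTop (P : R[X][X]) : WithBot (ℤ ×ₗ ℤ) :=
  P.support.sup fun j => (newtonKey m k s P j : WithBot (ℤ ×ₗ ℤ))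

variable {m k s}

lemma newtonScore_add (e e' j j' : ℕ) :
    newtonScore m k s (e + e') (j + j') = newtonScore m k s e j + newtonScore m k s e' j' := by
  simp only [newtonScore, ← toLex_add, Prod.mk_add_mk]
  congr 2 <;> push_cast <;> ring

lemma newtonScore_strictMono (hk : 0 < k) (j : ℕ) :
    StrictMono fun e => newtonScore m k s e j := fun e e' h =>
  Prod.Lex.toLex_strictMono (Prod.mk_lt_mk_iff_left.2 (by gcongr))

lemma eq_of_newtonScore_eq (hs : s ≠ 0) {e e' j j' : ℕ}
    (h : newtonScore m k s e j = newtonScore m k s e' j') : j = j' := by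
  simp only [newtonScore, toLex_inj, Prod.mk.injEq] at h
  exact_mod_cast mul_left_cancel₀ hs h.2

lemma exists_newtonTop_eq {P : R[X][X]} (hP : P ≠ 0) :
    ∃ i ∈ P.support, newtonTop m k s P = newtonKey m k s P i :=
  Finset.exists_mem_eq_sup _ (support_nonempty.2 hP) _

lemma newtonKey_le_newtonTop {P : R[X][X]} {i : ℕ} (hi : i ∈ P.support) :
    (newtonKey m k s P i : WithBot (ℤ ×ₗ ℤ)) ≤ newtonTop m k s P :=
  Finset.le_sup (f := fun j => (newtonKey m k s P j : WithBot (ℤ ×ₗ ℤ))) hi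

lemma newtonKey_le_of_newtonTop_eq {P : R[X][X]} {i j : ℕ}
    (htop : newtonTop m k s P = newtonKey m k s P i) (hj : j ∈ P.support) :
    newtonKey m k s P j ≤ newtonKey m k s P i :=
  WithBot.coe_le_coe.1 (htop ▸ newtonKey_le_newtonTop hj)

variable [IsDomain R]

lemma newtonScore_coeff_mul {P Q : R[X][X]} {i j : ℕ} (hi : P.coeff i ≠ 0) (hj : Q.coeff j ≠ 0) :
    newtonScore m k s (P.coeff i * Q.coeff j).natDegree (i + j) =
      newtonKey m k s P i + newtonKey m k s Q j := by
  rw [natDegree_mul hi hj, newtonScore_add]; rfl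


lemma newtonKey_mul_le (hk : 0 < k) {P Q : R[X][X]} {a b : ℤ ×ₗ ℤ}
    (hP : ∀ i ∈ P.support, newtonKey m k s P i ≤ a)
    (hQ : ∀ j ∈ Q.support, newtonKey m k s Q j ≤ b)
    {n : ℕ} (hn : n ∈ (P * Q).support) : newtonKey m k s (P * Q) n ≤ a + b := by
  obtain ⟨x, hx, hsup⟩ := Finset.exists_mem_eq_sup (antidiagonal n) ⟨(0, n), by simp⟩
    fun x => (P.coeff x.1 * Q.coeff x.2).degree
  have hdeg : ((P * Q).coeff n).degree ≤ (P.coeff x.1 * Q.coeff x.2).degree := by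
    rw [coeff_mul, ← hsup]; exact degree_sum_le _ _
  have hx0 : P.coeff x.1 * Q.coeff x.2 ≠ 0 := by
    intro h
    rw [h, degree_zero, le_bot_iff, degree_eq_bot] at hdeg
    exact mem_support_iff.1 hn hdeg
  obtain ⟨hx1, hx2⟩ := mul_ne_zero_iff.1 hx0
  rw [HasAntidiagonal.mem_antidiagonal] at hx
  calc newtonKey m k s (P * Q) n
      ≤ newtonScore m k s (P.coeff x.1 * Q.coeff x.2).natDegree n :=
        (newtonScore_strictMono hk n).monotone (natDegree_le_natDegree hdeg)
    _ = newtonKey m k s P x.1 + newtonKey m k s Q x.2 := by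
        rw [← hx, newtonScore_coeff_mul hx1 hx2]
    _ ≤ a + b := add_le_add (hP _ (mem_support_iff.2 hx1)) (hQ _ (mem_support_iff.2 hx2))

lemma newtonKey_mul_of_isMax (hk : 0 < k) (hs : s ≠ 0) {P Q : R[X][X]} {i₀ j₀ : ℕ}
    (hi₀ : i₀ ∈ P.support) (hj₀ : j₀ ∈ Q.support)
    (hP : ∀ i ∈ P.support, newtonKey m k s P i ≤ newtonKey m k s P i₀)
    (hQ : ∀ j ∈ Q.support, newtonKey m k s Q j ≤ newtonKey m k s Q j₀) :
    i₀ + j₀ ∈ (P * Q).support ∧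
      newtonKey m k s (P * Q) (i₀ + j₀) = newtonKey m k s P i₀ + newtonKey m k s Q j₀ := by
  set t : ℕ × ℕ → R[X] := fun x => P.coeff x.1 * Q.coeff x.2
  have ht₀ : t (i₀, j₀) ≠ 0 := mul_ne_zero (mem_support_iff.1 hi₀) (mem_support_iff.1 hj₀)
  have hlt : ∀ x ∈ (antidiagonal (i₀ + j₀)).erase (i₀, j₀),
      (t x).degree < (t (i₀, j₀)).degree := by
    intro x hx
    obtain ⟨hne, hx⟩ := Finset.mem_erase.1 hx
    by_cases hx0 : t x = 0
    · rw [hx0, degree_zero, bot_lt_iff_ne_bot, Ne, degree_eq_bot]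
      exact ht₀
    obtain ⟨hx1, hx2⟩ := mul_ne_zero_iff.1 hx0
    rw [HasAntidiagonal.mem_antidiagonal] at hx
    refine degree_lt_degree
      ((newtonScore_strictMono hk (i₀ + j₀) (m := m) (s := s)).lt_iff_lt.1 ?_)
    conv_lhs => rw [← hx]
    simp only [t]
    rw [newtonScore_coeff_mul hx1 hx2, newtonScore_coeff_mul (mem_support_iff.1 hi₀)
      (mem_support_iff.1 hj₀)]
    rcases (hP _ (mem_support_iff.2 hx1)).lt_or_eq with h1 | h1
    · exact add_lt_add_of_lt_of_le h1 (hQ _ (mem_support_iff.2 hx2))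
    · refine add_lt_add_of_le_of_lt h1.le
        ((hQ _ (mem_support_iff.2 hx2)).lt_of_ne fun h2 => hne ?_)
      exact Prod.ext (eq_of_newtonScore_eq hs h1) (eq_of_newtonScore_eq hs h2)
  have hdeg : ((P * Q).coeff (i₀ + j₀)).degree = (t (i₀, j₀)).degree := by
    rw [coeff_mul, ← add_sum_erase _ _ (HasAntidiagonal.mem_antidiagonal.2 rfl :
      (i₀, j₀) ∈ antidiagonal (i₀ + j₀))]
    refine degree_add_eq_left_of_degree_lt ((degree_sum_le _ _).trans_lt ?_)
    exact (Finset.sup_lt_iff (bot_lt_iff_ne_bot.2 (degree_ne_bot.2 ht₀))).2 hlt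
  refine ⟨mem_support_iff.2 fun h => ht₀ ?_, ?_⟩
  · rwa [h, degree_zero, eq_comm, degree_eq_bot] at hdeg
  · rw [newtonKey, natDegree_eq_of_degree_eq hdeg]
    exact newtonScore_coeff_mul (mem_support_iff.1 hi₀) (mem_support_iff.1 hj₀)

theorem newtonTop_mul (hk : 0 < k) (hs : s ≠ 0) (P Q : R[X][X]) :
    newtonTop m k s (P * Q) = newtonTop m k s P + newtonTop m k s Q := by
  rcases eq_or_ne P 0 with rfl | hP
  · simp [newtonTop]
  rcases eq_or_ne Q 0 with rfl | hQ
  · simp [newtonTop]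
  obtain ⟨i₀, hi₀, hPtop⟩ := exists_newtonTop_eq (m := m) (k := k) (s := s) hP
  obtain ⟨j₀, hj₀, hQtop⟩ := exists_newtonTop_eq (m := m) (k := k) (s := s) hQ
  have hPmax := fun i => newtonKey_le_of_newtonTop_eq (i := i₀) (j := i) hPtop
  have hQmax := fun j => newtonKey_le_of_newtonTop_eq (i := j₀) (j := j) hQtop
  obtain ⟨hmem, hkey⟩ := newtonKey_mul_of_isMax hk hs hi₀ hj₀ hPmax hQmax
  rw [hPtop, hQtop, ← WithBot.coe_add]
  refine le_antisymm (Finset.sup_le fun n hn => ?_) (hkey ▸ newtonKey_le_newtonTop hmem)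
  exact WithBot.coe_le_coe.2 (newtonKey_mul_le hk hPmax hQmax hn)

end NewtonKey

section Triangle

variable {R : Type*} [CommRing R] {P : R[X][X]}

lemma newtonTop_triangle_right (hdeg : P.natDegree = 15) (h6 : (P.coeff 6).natDegree = 2)
    (hj : ∀ j ≠ 6, (P.coeff j).natDegree = 0) :
    newtonTop 2 9 (-1) P = ↑(toLex ((30 : ℤ), (-6 : ℤ))) := by
  have h6mem : 6 ∈ P.support := mem_support_iff.2 fun h => by simp [h] at h6
  have hkey6 : newtonKey 2 9 (-1) P 6 = toLex (30, -6) := by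
    simp only [newtonKey, newtonScore, h6]; norm_num
  refine le_antisymm (Finset.sup_le fun j hjP => ?_) (hkey6 ▸ newtonKey_le_newtonTop h6mem)
  have hj15 : j ≤ 15 := hdeg ▸ le_natDegree_of_mem_supp j hjP
  rcases eq_or_ne j 6 with rfl | hj6
  · exact WithBot.coe_le_coe.2 hkey6.le
  · simp only [newtonKey, newtonScore, hj j hj6, WithBot.coe_le_coe, Prod.Lex.toLex_le_toLex]
    omega

lemma newtonTop_triangle_left (h6 : (P.coeff 6).natDegree = 2)
    (hj : ∀ j ≠ 6, (P.coeff j).natDegree = 0) :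
    newtonTop (-1) 3 1 P = ↑(toLex ((0 : ℤ), (6 : ℤ))) := by
  have h6mem : 6 ∈ P.support := mem_support_iff.2 fun h => by simp [h] at h6
  have hkey6 : newtonKey (-1) 3 1 P 6 = toLex (0, 6) := by
    simp only [newtonKey, newtonScore, h6]; norm_num
  refine le_antisymm (Finset.sup_le fun j hjP => ?_) (hkey6 ▸ newtonKey_le_newtonTop h6mem)
  rcases eq_or_ne j 6 with rfl | hj6
  · exact WithBot.coe_le_coe.2 hkey6.le
  · simp only [newtonKey, newtonScore, hj j hj6, WithBot.coe_le_coe, Prod.Lex.toLex_le_toLex]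
    omega

variable [IsDomain R]

lemma triangle_factor_bounds {A : R[X][X]} (hA : A.Monic) (hA0 : A.coeff 0 ≠ 0) {β γ : ℕ}
    (hβ : β ∈ A.support) (hγ : γ ∈ A.support)
    (htop₂ : newtonTop 2 9 (-1) A = newtonKey 2 9 (-1) A β)
    (htop₁ : newtonTop (-1) 3 1 A = newtonKey (-1) 3 1 A γ) :
    2 * (A.natDegree : ℤ) ≤ 9 * (A.coeff β).natDegree + 2 * β ∧
      0 ≤ 3 * ((A.coeff γ).natDegree : ℤ) - γ ∧ γ ≤ β := by
  have hlead := Prod.Lex.monotone_fst _ _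
    (newtonKey_le_of_newtonTop_eq htop₂ (natDegree_mem_support_of_nonzero hA.ne_zero))
  have hconst := Prod.Lex.monotone_fst _ _
    (newtonKey_le_of_newtonTop_eq htop₁ (mem_support_iff.2 hA0))
  have hγβ := Prod.Lex.monotone_fst _ _ (newtonKey_le_of_newtonTop_eq htop₂ hγ)
  have hβγ := Prod.Lex.monotone_fst _ _ (newtonKey_le_of_newtonTop_eq htop₁ hβ)
  simp only [newtonKey, newtonScore, ofLex_toLex, hA.coeff_natDegree, natDegree_one]
    at hlead hconst hγβ hβγ
  omega

lemma fifteen_dvd_natDegree_of_mul_eq (hdeg : P.natDegree = 15) (h0 : P.coeff 0 ≠ 0)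
    (h6 : (P.coeff 6).natDegree = 2) (hj : ∀ j ≠ 6, (P.coeff j).natDegree = 0)
    {A B : R[X][X]} (hA : A.Monic) (hB : B.Monic) (hAB : A * B = P) : 15 ∣ A.natDegree := by
  have hdegAB : A.natDegree + B.natDegree = 15 := by
    rw [← natDegree_mul hA.ne_zero hB.ne_zero, hAB, hdeg]
  rw [← hAB, mul_coeff_zero] at h0
  obtain ⟨hA0, hB0⟩ := mul_ne_zero_iff.1 h0
  obtain ⟨βA, hβA, htopA₂⟩ := exists_newtonTop_eq (m := 2) (k := 9) (s := -1) hA.ne_zero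
  obtain ⟨βB, hβB, htopB₂⟩ := exists_newtonTop_eq (m := 2) (k := 9) (s := -1) hB.ne_zero
  obtain ⟨γA, hγA, htopA₁⟩ := exists_newtonTop_eq (m := -1) (k := 3) (s := 1) hA.ne_zero
  obtain ⟨γB, hγB, htopB₁⟩ := exists_newtonTop_eq (m := -1) (k := 3) (s := 1) hB.ne_zero
  have hright := newtonTop_mul (m := 2) (k := 9) (s := -1) (by norm_num) (by norm_num) A B
  have hleft := newtonTop_mul (m := -1) (k := 3) (s := 1) (by norm_num) (by norm_num) A B
  rw [hAB, newtonTop_triangle_right hdeg h6 hj, htopA₂, htopB₂, ← WithBot.coe_add,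
    WithBot.coe_inj] at hright
  rw [hAB, newtonTop_triangle_left h6 hj, htopA₁, htopB₁, ← WithBot.coe_add,
    WithBot.coe_inj] at hleft
  simp only [newtonKey, newtonScore, ← toLex_add, toLex_inj, Prod.mk_add_mk, Prod.mk.injEq]
    at hright hleft
  obtain ⟨hA₂, hA₁, hγβA⟩ := triangle_factor_bounds hA hA0 hβA hγA htopA₂ htopA₁
  obtain ⟨hB₂, hB₁, hγβB⟩ := triangle_factor_bounds hB hB0 hβB hγB htopB₂ htopB₁
  obtain rfl : γA = βA := by omega
  omega

theorem irreducible_of_newtonPolygon_triangle (hP : P.Monic) (hdeg : P.natDegree = 15)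
    (h0 : P.coeff 0 ≠ 0) (h6 : (P.coeff 6).natDegree = 2)
    (hj : ∀ j ≠ 6, (P.coeff j).natDegree = 0) : Irreducible P := by
  refine hP.irreducible_iff_natDegree.2 ⟨fun h => by simp [h] at hdeg, fun A B hA hB hAB => ?_⟩
  have h15 := fifteen_dvd_natDegree_of_mul_eq hdeg h0 h6 hj hA hB hAB
  have hdegAB : A.natDegree + B.natDegree = 15 := by
    rw [← natDegree_mul hA.ne_zero hB.ne_zero, hAB, hdeg]
  omega

end Triangle

section U5

local notation "g₁" => (MvPolynomial.X 0 : MvPolynomial (Fin 3) ℂ)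
local notation "g₂" => (MvPolynomial.X 1 : MvPolynomial (Fin 3) ℂ)
local notation "q" => (MvPolynomial.X 2 : MvPolynomial (Fin 3) ℂ)

/-- The polynomial of the theorem in `ℂ[g₁, g₂, q][g₀][x]`, split into its `g₀`-free part and its
coefficient of `x⁶`. -/
noncomputable def u5Rest : (MvPolynomial (Fin 3) ℂ)[X] :=
  X ^ 15 + C (3 * q * g₁ - q * g₂ ^ 2) * X ^ 12 + C (15 * q ^ 2) * X ^ 10
    + C (12 * q ^ 3 * g₁ - 4 * q ^ 3 * g₂ ^ 2) * X ^ 7 + C (48 * q ^ 4) * X ^ 5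
    + C (-4 * g₂ ^ 4 * q ^ 4 - 36 * g₁ ^ 2 * q ^ 4 + 24 * g₁ * g₂ ^ 2 * q ^ 4) * X ^ 4
    + C (32 * q ^ 5 * g₂ ^ 2 - 96 * q ^ 5 * g₁) * X ^ 2 - C (64 * q ^ 6)

noncomputable def u5Coeff6 : (MvPolynomial (Fin 3) ℂ)[X] :=
  C (-4 * g₁ ^ 3 * q ^ 3 + g₁ ^ 2 * g₂ ^ 2 * q ^ 3)
    + C (-4 * g₂ ^ 3 * q ^ 3 + 18 * g₁ * g₂ * q ^ 3) * X - C (27 * q ^ 3) * X ^ 2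

noncomputable def u5Poly : (MvPolynomial (Fin 3) ℂ)[X][X] := u5Rest.map C + C u5Coeff6 * X ^ 6

lemma u5Rest_monic : u5Rest.Monic := by
  unfold u5Rest; monicity!

lemma u5Rest_natDegree : u5Rest.natDegree = 15 := by
  unfold u5Rest; compute_degree!

lemma u5Rest_coeff_zero : u5Rest.coeff 0 = -(64 * q ^ 6) := by
  simp only [u5Rest, coeff_add, coeff_sub, coeff_C_mul_X_pow, coeff_X_pow, coeff_C]
  norm_num

lemma u5Rest_coeff_six : u5Rest.coeff 6 = 0 := by
  simp only [u5Rest, coeff_add, coeff_sub, coeff_C_mul_X_pow, coeff_X_pow, coeff_C]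
  norm_num

lemma u5Coeff6_natDegree : u5Coeff6.natDegree = 2 := by
  unfold u5Coeff6; compute_degree!

lemma u5Poly_coeff (j : ℕ) :
    u5Poly.coeff j = C (u5Rest.coeff j) + if j = 6 then u5Coeff6 else 0 := by
  simp only [u5Poly, coeff_add, coeff_map, coeff_C_mul_X_pow]

lemma u5Poly_monic : u5Poly.Monic := by
  refine (u5Rest_monic.map C).add_of_left ((degree_C_mul_X_pow_le 6 _).trans_lt ?_)
  rw [degree_map_eq_of_injective C_injective, degree_eq_natDegree u5Rest_monic.ne_zero,
    u5Rest_natDegree]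
  norm_num

lemma u5Poly_natDegree : u5Poly.natDegree = 15 := by
  rw [u5Poly, natDegree_add_eq_left_of_degree_lt, natDegree_map_eq_of_injective C_injective,
    u5Rest_natDegree]
  refine (degree_C_mul_X_pow_le 6 _).trans_lt ?_
  rw [degree_map_eq_of_injective C_injective, degree_eq_natDegree u5Rest_monic.ne_zero,
    u5Rest_natDegree]
  norm_num

lemma u5Poly_irreducible : Irreducible u5Poly := by
  refine irreducible_of_newtonPolygon_triangle u5Poly_monic u5Poly_natDegree ?_ ?_ fun j hj => ?_
  · rw [u5Poly_coeff, if_neg (by norm_num), add_zero, Ne, C_eq_zero, u5Rest_coeff_zero]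
    simp [MvPolynomial.X_ne_zero]
  · rw [u5Poly_coeff, if_pos rfl, u5Rest_coeff_six, C_0, zero_add, u5Coeff6_natDegree]
  · rw [u5Poly_coeff, if_neg hj, add_zero, natDegree_C]

end U5

namespace MvPolynomial

variable {R : Type*} [CommSemiring R] {n : ℕ}

lemma finSuccEquiv_symm_C_X (j : Fin n) :
    (finSuccEquiv R n).symm (Polynomial.C (X j)) = X j.succ := by
  rw [AlgEquiv.symm_apply_eq, finSuccEquiv_X_succ]

lemma finSuccEquiv_symm_X : (finSuccEquiv R n).symm Polynomial.X = X 0 := by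
  rw [AlgEquiv.symm_apply_eq, finSuccEquiv_X_zero]

end MvPolynomial

/-- The degree-15 characteristic polynomial of the operator `x = v₀/5` in the
fifteen rank-three, `t = 1`, `{1,1}` vacua of the U(5) theory with one adjoint
is irreducible over the field `ℂ(g₀,g₁,g₂,q)` of rational functions in four
independent indeterminates over `ℂ`. -/
theorem U5_rank3_poly_irreducible :
    let R := MvPolynomial (Fin 4) ℂ
    let K := FractionRing R
    let g0 : K := algebraMap R K (MvPolynomial.X 0)
    let g1 : K := algebraMap R K (MvPolynomial.X 1)
    let g2 : K := algebraMap R K (MvPolynomial.X 2)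
    let q : K := algebraMap R K (MvPolynomial.X 3)
    Irreducible (Polynomial.X ^ 15
      + Polynomial.C (3 * q * g1 - q * g2 ^ 2) * Polynomial.X ^ 12
      + Polynomial.C (15 * q ^ 2) * Polynomial.X ^ 10
      + Polynomial.C (12 * q ^ 3 * g1 - 4 * q ^ 3 * g2 ^ 2) * Polynomial.X ^ 7
      + Polynomial.C (-4 * g1 ^ 3 * q ^ 3 - 4 * g0 * g2 ^ 3 * q ^ 3 - 27 * g0 ^ 2 * q ^ 3
          + g1 ^ 2 * g2 ^ 2 * q ^ 3 + 18 * g0 * g1 * g2 * q ^ 3) * Polynomial.X ^ 6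
      + Polynomial.C (48 * q ^ 4) * Polynomial.X ^ 5
      + Polynomial.C (-4 * g2 ^ 4 * q ^ 4 - 36 * g1 ^ 2 * q ^ 4
          + 24 * g1 * g2 ^ 2 * q ^ 4) * Polynomial.X ^ 4
      + Polynomial.C (32 * q ^ 5 * g2 ^ 2 - 96 * q ^ 5 * g1) * Polynomial.X ^ 2
      - Polynomial.C (64 * q ^ 6) : Polynomial K) := by
  intro R K g0 g1 g2 q
  have hirr : Irreducible
      (u5Poly.map ((MvPolynomial.finSuccEquiv ℂ 3).symm : _ →+* MvPolynomial (Fin 4) ℂ)) :=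
    (MulEquiv.irreducible_iff (mapEquiv (MvPolynomial.finSuccEquiv ℂ 3).symm.toRingEquiv)).2
      u5Poly_irreducible
  convert ((u5Poly_monic.map _).irreducible_iff_irreducible_map_fraction_map (K := K)).1 hirr
    using 1
  simp only [u5Poly, u5Rest, u5Coeff6, Polynomial.map_add, Polynomial.map_sub,
    Polynomial.map_mul, Polynomial.map_pow, Polynomial.map_neg, Polynomial.map_ofNat, map_X, map_C,
    map_add, map_sub, map_mul, map_pow, map_neg, map_ofNat, RingHom.coe_coe,
    MvPolynomial.finSuccEquiv_symm_C_X, MvPolynomial.finSuccEquiv_symm_X, Fin.reduceSucc]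
  ring
end
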